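/- For a Zinbiel-associative bialgebra H = K ⊕ H̄, the map e := Id − μ ∘ Δ_≺ restricted to H̄ (equivalently e = J − J⋆J + (J⋆J)⋆J − ⋯ with J = Id − uc and convolution f⋆g = ≺ ∘ (f⊗g) ∘ Δ) is an idempotent whose image is the space of primitives, and e(x ≺ y) = 0 for all x, y ∈ H̄. -/

import Mathlib

/-!
Writing `Z = lift z`, the alternating series satisfies the recursion `e = id − Z ∘ (e ⊗ id) ∘ δ`
(that is, `e = J − e ⋆ J`), so `e` fixes the primitives. The other claims follow by induction
along the coradical filtration. If `δ (e a) = 0` for the left tensor factors `a` of `δ x`, the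
compatibility gives `δ (Z ((e ⊗ id) (δ x))) = (e ⊗ id) (δ x) + (Z (e ⊗ id) ⊗ id) ((δ ⊗ id) (δ x))`
after coassociativity, and by the recursion this is `(e ⊗ id) (δ x) + ((id − e) ⊗ id) (δ x) = δ x`,
so `δ (e x) = 0`. In `e (x ≺ y) = x ≺ y − Z ((e ⊗ id) (δ (x ≺ y)))`, the terms of the
compatibility either vanish by induction or, through the Zinbiel relation, add up to
`e x ≺ y + (x − e x) ≺ y = x ≺ y`. Idempotency follows since `e` maps into the primitives.
-/

open scoped TensorProduct

/-- The (reduced) coradical filtration of a (non-counital) coalgebra `(Hb, δ)`: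
`F_0 = 0` and `F_{r+1} = {x | δ(x) ∈ F_r ⊗ F_r}`. -/
noncomputable def redFiltration {K Hb : Type*} [Field K] [AddCommGroup Hb] [Module K Hb]
    (δ : Hb →ₗ[K] Hb ⊗[K] Hb) : ℕ → Submodule K Hb
  | 0 => ⊥
  | r + 1 =>
      Submodule.comap δ
        (LinearMap.range (TensorProduct.map
          (redFiltration δ r).subtype (redFiltration δ r).subtype))

open TensorProduct

namespace TensorProduct

variable {R M N P : Type*} [CommRing R] [AddCommGroup M] [Module R M] [AddCommGroup N]
  [Module R N] [AddCommGroup P] [Module R P]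

theorem eq_of_mem_range_map_subtype {p : Submodule R M} {q : Submodule R N}
    {f g : M ⊗[R] N →ₗ[R] P} (h : ∀ a ∈ p, ∀ b ∈ q, f (a ⊗ₜ b) = g (a ⊗ₜ b))
    {t : M ⊗[R] N} (ht : t ∈ LinearMap.range (map p.subtype q.subtype)) : f t = g t := by
  obtain ⟨t, rfl⟩ := ht
  suffices f ∘ₗ map p.subtype q.subtype = g ∘ₗ map p.subtype q.subtype from
    LinearMap.congr_fun this t
  exact TensorProduct.ext' fun a b => h a a.2 b b.2

end TensorProduct

section

variable {K Hb : Type*} [CommRing K] [AddCommGroup Hb] [Module K Hb]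
  {z : Hb →ₗ[K] Hb →ₗ[K] Hb} {δ : Hb →ₗ[K] Hb ⊗[K] Hb}

/-- The compatibility `Δ(x ≺ y) = x₁ ≺ y₁ ⊗ x₂ * y₂` of a Zinbiel product with a coproduct,
written for the reduced coproduct `δ` on the augmentation ideal. -/
def IsReducedCompatible (z : Hb →ₗ[K] Hb →ₗ[K] Hb) (δ : Hb →ₗ[K] Hb ⊗[K] Hb) : Prop :=
  ∀ x y : Hb,
    δ (z x y)
      = x ⊗ₜ[K] y
        + map (z x) LinearMap.id (δ y)
        + map LinearMap.id ((z + z.flip).flip y) (δ x)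
        + map (z.flip y) LinearMap.id (δ x)
        + map (lift z) (lift (z + z.flip)) (tensorTensorTensorComm K Hb Hb Hb Hb (δ x ⊗ₜ δ y))

/-- With `S (n + 1) = ⋆ⁿ⁺¹J`, the partial sums of `J − J⋆J + (J⋆J)⋆J − ⋯`. -/
def alternatingPartialSum (S : ℕ → Hb →ₗ[K] Hb) (M : ℕ) : Hb →ₗ[K] Hb :=
  ∑ n ∈ Finset.range M, (-1 : K) ^ n • S (n + 1)

theorem alternatingPartialSum_succ {S : ℕ → Hb →ₗ[K] Hb} (hS1 : S 1 = LinearMap.id)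
    (hSsucc : ∀ n : ℕ, 1 ≤ n → S (n+1) = lift z ∘ₗ map (S n) LinearMap.id ∘ₗ δ) (M : ℕ) :
    alternatingPartialSum S (M + 1)
      = LinearMap.id - lift z ∘ₗ map (alternatingPartialSum S M) LinearMap.id ∘ₗ δ := by
  have hmap : map (alternatingPartialSum S M) LinearMap.id
      = ∑ n ∈ Finset.range M, (-1 : K) ^ n • map (S (n + 1)) (LinearMap.id : Hb →ₗ[K] Hb) := by
    simp only [alternatingPartialSum, ← map_smul_left]
    exact map_sum (LinearMap.rTensorHom Hb) _ _
  ext x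
  rw [LinearMap.sub_apply, LinearMap.comp_apply, LinearMap.comp_apply, hmap]
  simp [alternatingPartialSum, Finset.sum_range_succ', LinearMap.sum_apply, hS1,
    pow_succ, hSsucc (_ + 1) (Nat.succ_pos _), neg_add_eq_sub]

theorem eq_sub_convolution_of_alternating_sum {S : ℕ → Hb →ₗ[K] Hb}
    (hS1 : S 1 = LinearMap.id)
    (hSsucc : ∀ n : ℕ, 1 ≤ n → S (n+1) = lift z ∘ₗ map (S n) LinearMap.id ∘ₗ δ)
    {e : Hb →ₗ[K] Hb}
    (he : ∀ x : Hb, ∃ N : ℕ, ∀ M : ℕ, N ≤ M →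
      e x = ∑ n ∈ Finset.range M, ((-1 : K) ^ n) • S (n+1) x) :
    ∀ x, e x = x - lift z (map e LinearMap.id (δ x)) := by
  have hE : ∀ y, ∀ᶠ M in Filter.atTop, e y = alternatingPartialSum S M y := fun y => by
    simpa [alternatingPartialSum, LinearMap.sum_apply] using Filter.eventually_atTop.2 (he y)
  intro x
  obtain ⟨s, hs⟩ := TensorProduct.exists_finset (δ x)
  obtain ⟨M, hxM, hsM⟩ := ((Filter.tendsto_add_atTop_nat 1).eventually (hE x)).and
    ((Filter.eventually_all_finset s).2 fun i _ => hE i.1) |>.exists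
  rw [hxM, alternatingPartialSum_succ hS1 hSsucc]
  simp only [hs, map_sum, LinearMap.sub_apply, LinearMap.comp_apply, map_tmul, lift.tmul]
  exact congrArg _ (Finset.sum_congr rfl fun i hi => by rw [hsM i hi])

variable {e : Hb →ₗ[K] Hb}

theorem eq_self_of_comul_eq_zero (hrec : ∀ x, e x = x - lift z (map e LinearMap.id (δ x)))
    {x : Hb} (hx : δ x = 0) : e x = x := by
  simp [hrec x, hx]

theorem comul_idempotent_eq_zero_of_mem_range
    (hcoassoc : ∀ x : Hb,
      (TensorProduct.assoc K Hb Hb Hb) ((TensorProduct.map δ LinearMap.id) (δ x))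
        = (TensorProduct.map LinearMap.id δ) (δ x))
    (hcompat : IsReducedCompatible z δ)
    (hrec : ∀ x, e x = x - lift z (map e LinearMap.id (δ x)))
    {p : Submodule K Hb} (hp : ∀ a ∈ p, δ (e a) = 0)
    {x : Hb} (hx : δ x ∈ LinearMap.range (map p.subtype p.subtype)) : δ (e x) = 0 := by
  set G : (Hb ⊗[K] Hb) ⊗[K] Hb →ₗ[K] Hb ⊗[K] Hb :=
    map (lift z ∘ₗ map e LinearMap.id) LinearMap.id
  have hG_assoc : ∀ a w, G ((TensorProduct.assoc K Hb Hb Hb).symm (a ⊗ₜ w))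
      = map (z (e a)) LinearMap.id w := fun a w => by
    induction w using TensorProduct.induction_on with
    | zero => simp
    | tmul c d => simp [G]
    | add w₁ w₂ h₁ h₂ => simp only [tmul_add, map_add, h₁, h₂]
  have hG_comul : ∀ t, G (map δ LinearMap.id t) = t - map e LinearMap.id t := fun t => by
    induction t using TensorProduct.induction_on with
    | zero => simp
    | tmul a b => simp [G, ← sub_tmul, hrec a]
    | add t₁ t₂ h₁ h₂ => simp only [map_add, h₁, h₂]; abel
  have hleibniz : δ (lift z (map e LinearMap.id (δ x))) = map e LinearMap.id (δ x)
      + G ((TensorProduct.assoc K Hb Hb Hb).symm (map LinearMap.id δ (δ x))) := by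
    refine eq_of_mem_range_map_subtype (f := δ ∘ₗ lift z ∘ₗ map e LinearMap.id)
      (g := map e LinearMap.id
        + G ∘ₗ (TensorProduct.assoc K Hb Hb Hb).symm.toLinearMap ∘ₗ map LinearMap.id δ)
      (fun a ha b _ => ?_) hx
    simp [hcompat (e a) b, hp a ha, hG_assoc]
  rw [hrec x, map_sub, hleibniz, ← hcoassoc, LinearEquiv.symm_apply_apply, hG_comul]
  abel

theorem idempotent_product_eq_zero_of_mem_range
    (hz : ∀ x y w : Hb, z (z x y) w = z x (z y w) + z x (z w y))
    (hcompat : IsReducedCompatible z δ)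
    (hrec : ∀ x, e x = x - lift z (map e LinearMap.id (δ x)))
    {p q : Submodule K Hb} {x y : Hb}
    (hx : δ x ∈ LinearMap.range (map p.subtype p.subtype))
    (hy : δ y ∈ LinearMap.range (map q.subtype q.subtype))
    (hxq : ∀ c ∈ q, e (z x c) = 0) (hpy : ∀ a ∈ p, e (z a y) = 0)
    (hpq : ∀ a ∈ p, ∀ c ∈ q, e (z a c) = 0) :
    e (z x y) = 0 := by
  have h₁ : lift z (map e LinearMap.id (map (z x) LinearMap.id (δ y))) = 0 :=
    eq_of_mem_range_map_subtype (f := lift z ∘ₗ map e LinearMap.id ∘ₗ map (z x) LinearMap.id)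
      (g := 0) (fun c hc d _ => by simp [hxq c hc]) hy
  have h₂ : lift z (map e LinearMap.id (map LinearMap.id ((z + z.flip).flip y) (δ x)))
      = z (x - e x) y := by
    have hcomm : lift z ∘ₗ map e LinearMap.id ∘ₗ map LinearMap.id ((z + z.flip).flip y)
        = z.flip y ∘ₗ lift z ∘ₗ map e LinearMap.id :=
      TensorProduct.ext' fun a b => by simp [hz]
    have := LinearMap.congr_fun hcomm (δ x)
    simp only [LinearMap.comp_apply, LinearMap.flip_apply] at this
    rw [this, hrec x, sub_sub_cancel]
  have h₃ : lift z (map e LinearMap.id (map (z.flip y) LinearMap.id (δ x))) = 0 :=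
    eq_of_mem_range_map_subtype
      (f := lift z ∘ₗ map e LinearMap.id ∘ₗ map (z.flip y) LinearMap.id) (g := 0)
      (fun a ha b _ => by simp [hpy a ha]) hx
  have h₄ : lift z (map e LinearMap.id (map (lift z) (lift (z + z.flip))
      (tensorTensorTensorComm K Hb Hb Hb Hb (δ x ⊗ₜ δ y)))) = 0 := by
    set F := lift z ∘ₗ map e LinearMap.id ∘ₗ map (lift z) (lift (z + z.flip)) ∘ₗ
      (tensorTensorTensorComm K Hb Hb Hb Hb).toLinearMap
    refine eq_of_mem_range_map_subtype (f := F ∘ₗ (TensorProduct.mk K _ _).flip (δ y)) (g := 0)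
      (fun a ha b _ => ?_) hx
    exact eq_of_mem_range_map_subtype (f := F ∘ₗ TensorProduct.mk K _ _ (a ⊗ₜ b)) (g := 0)
      (fun c hc d _ => by simp [F, hpq a ha c hc]) hy
  rw [hrec (z x y), hcompat x y]
  simp only [map_add, h₁, h₂, h₃, h₄]
  simp

end

section Filtration

variable {K Hb : Type*} [Field K] [AddCommGroup Hb] [Module K Hb]
  {z : Hb →ₗ[K] Hb →ₗ[K] Hb} {δ : Hb →ₗ[K] Hb ⊗[K] Hb} {e : Hb →ₗ[K] Hb}

theorem mem_redFiltration_zero {x : Hb} : x ∈ redFiltration δ 0 ↔ x = 0 :=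
  Submodule.mem_bot K

theorem mem_redFiltration_succ {r : ℕ} {x : Hb} :
    x ∈ redFiltration δ (r + 1) ↔
      δ x ∈ LinearMap.range (map (redFiltration δ r).subtype (redFiltration δ r).subtype) :=
  Iff.rfl

theorem comul_idempotent_eq_zero_of_mem_redFiltration
    (hcoassoc : ∀ x : Hb,
      (TensorProduct.assoc K Hb Hb Hb) ((TensorProduct.map δ LinearMap.id) (δ x))
        = (TensorProduct.map LinearMap.id δ) (δ x))
    (hcompat : IsReducedCompatible z δ)
    (hrec : ∀ x, e x = x - lift z (map e LinearMap.id (δ x))) :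
    ∀ r, ∀ x ∈ redFiltration δ r, δ (e x) = 0 := by
  intro r
  induction r with
  | zero => intro x hx; simp [mem_redFiltration_zero.1 hx]
  | succ r ih =>
    intro x hx
    exact comul_idempotent_eq_zero_of_mem_range hcoassoc hcompat hrec ih
      (mem_redFiltration_succ.1 hx)

theorem idempotent_product_eq_zero_of_mem_redFiltration
    (hz : ∀ x y w : Hb, z (z x y) w = z x (z y w) + z x (z w y))
    (hcompat : IsReducedCompatible z δ)
    (hrec : ∀ x, e x = x - lift z (map e LinearMap.id (δ x))) :
    ∀ r t, ∀ x ∈ redFiltration δ r, ∀ y ∈ redFiltration δ t, e (z x y) = 0 := by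
  intro r
  induction r with
  | zero => intro t x hx y _; simp [mem_redFiltration_zero.1 hx]
  | succ r ihr =>
    intro t
    induction t with
    | zero => intro x _ y hy; simp [mem_redFiltration_zero.1 hy]
    | succ t iht =>
      intro x hx y hy
      exact idempotent_product_eq_zero_of_mem_range hz hcompat hrec
        (mem_redFiltration_succ.1 hx) (mem_redFiltration_succ.1 hy)
        (fun c hc => iht x hx c hc) (fun a ha => ihr (t + 1) a ha y hy)
        (fun a ha c hc => ihr t a ha c hc)

end Filtration

/-- For an associative-Zinbiel bialgebra `H = K·1 ⊕ H̄` (described here by its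
augmentation ideal `H̄ = Hb`, with Zinbiel product `z`, reduced coassociative
coproduct `δ` and the induced reduced compatibility relation), the convolution
idempotent `e = J − J⋆J + (J⋆J)⋆J − ⋯` (with `J = Id − uc` and
`f ⋆ g = ≺ ∘ (f ⊗ g) ∘ Δ`) is an idempotent whose image is the space of
primitives, and `e(x ≺ y) = 0` for all `x, y ∈ H̄`. -/
theorem convolution_idempotent_onto_primitives
    {K Hb : Type*} [Field K] [AddCommGroup Hb] [Module K Hb]
    (z : Hb →ₗ[K] Hb →ₗ[K] Hb)
    (hz : ∀ x y w : Hb, z (z x y) w = z x (z y w) + z x (z w y))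
    (δ : Hb →ₗ[K] Hb ⊗[K] Hb)
    (hcoassoc : ∀ x : Hb,
      (TensorProduct.assoc K Hb Hb Hb) ((TensorProduct.map δ LinearMap.id) (δ x))
        = (TensorProduct.map LinearMap.id δ) (δ x))
    -- reduced form of the compatibility Δ(x ≺ y) = x₁≺y₁ ⊗ x₂*y₂ :
    (hcompat : ∀ x y : Hb,
      δ (z x y)
        = x ⊗ₜ[K] y
          + (TensorProduct.map (z x) LinearMap.id) (δ y)
          + (TensorProduct.map LinearMap.id ((z + z.flip).flip y)) (δ x)
          + (TensorProduct.map (z.flip y) LinearMap.id) (δ x)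
          + (TensorProduct.map (TensorProduct.lift z) (TensorProduct.lift (z + z.flip)))
              ((TensorProduct.tensorTensorTensorComm K Hb Hb Hb Hb)
                ((δ x) ⊗ₜ[K] (δ y))))
    (hconn : ∀ x : Hb, ∃ r : ℕ, x ∈ redFiltration δ r)
    -- the left-nested convolution powers S n = ⋆ⁿJ (on H̄, J = Id)
    (S : ℕ → (Hb →ₗ[K] Hb))
    (hS1 : S 1 = LinearMap.id)
    (hSsucc : ∀ n : ℕ, 1 ≤ n →
      S (n+1) = (TensorProduct.lift z) ∘ₗ (TensorProduct.map (S n) LinearMap.id) ∘ₗ δ)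
    -- e is the stabilized value of the alternating series Σ (−1)^{n-1} ⋆ⁿJ
    (e : Hb →ₗ[K] Hb)
    (he : ∀ x : Hb, ∃ N : ℕ, ∀ M : ℕ, N ≤ M →
      e x = ∑ n ∈ Finset.range M, ((-1 : K) ^ n) • S (n+1) x) :
    (Set.range e = {x : Hb | δ x = 0}) ∧
    (∀ x y : Hb, e (z x y) = 0) ∧
    (e ∘ₗ e = e) := by
  have hrec := eq_sub_convolution_of_alternating_sum hS1 hSsucc he
  have hprim : ∀ x, δ (e x) = 0 := fun x =>
    let ⟨r, hr⟩ := hconn x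
    comul_idempotent_eq_zero_of_mem_redFiltration hcoassoc hcompat hrec r x hr
  refine ⟨Set.ext fun x => ⟨?_, fun hx => ⟨x, eq_self_of_comul_eq_zero hrec hx⟩⟩, fun x y => ?_,
    LinearMap.ext fun x => eq_self_of_comul_eq_zero hrec (hprim x)⟩
  · rintro ⟨y, rfl⟩
    exact hprim y
  · obtain ⟨r, hr⟩ := hconn x
    obtain ⟨t, ht⟩ := hconn y
    exact idempotent_product_eq_zero_of_mem_redFiltration hz hcompat hrec r t x hr y ht
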